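/- Let p be a strongly 312-avoiding permutation of length n ending in 1 (p(n)=1). If p(1) > p(2), then p is the decreasing permutation n (n-1) ⋯ 2 1. -/
import Mathlib


def Avoids312 {n : ℕ} (p : Equiv.Perm (Fin n)) : Prop :=
  ¬ ∃ a b c : Fin n, a < b ∧ b < c ∧ p b < p c ∧ p c < p a

def StronglyAvoids312 {n : ℕ} (p : Equiv.Perm (Fin n)) : Prop :=
  Avoids312 p ∧ Avoids312 (p * p)

/-- If a strongly 312-avoiding permutation ending in 1 begins with a descent, it is the
decreasing permutation n (n-1) ⋯ 2 1. -/
theorem descent_start_implies_decreasing {n : ℕ} (hn : 2 ≤ n) (p : Equiv.Perm (Fin n))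
    (hp : StronglyAvoids312 p) (hlast : (p ⟨n - 1, by omega⟩ : ℕ) = 0)
    (hdes : p ⟨1, by omega⟩ < p ⟨0, by omega⟩) :
    ∀ i : Fin n, (p i : ℕ) = n - 1 - i := by
  have hn1 : n - 1 < n := by omega
  have h0n : 0 < n := by omega
  have h1n : 1 < n := by omega
  have hA : ∀ a b c : Fin n, a < b → b < c → p b < p c → p c < p a → False :=
    fun a b c h1 h2 h3 h4 => hp.1 ⟨a, b, c, h1, h2, h3, h4⟩
  have hA2 : ∀ a b c : Fin n, a < b → b < c → p (p b) < p (p c) → p (p c) < p (p a) → False :=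
    fun a b c h1 h2 h3 h4 => hp.2 ⟨a, b, c, h1, h2,
      by simpa only [Equiv.Perm.mul_apply] using h3,
      by simpa only [Equiv.Perm.mul_apply] using h4⟩
  set L : Fin n := ⟨n - 1, hn1⟩ with hLdef
  have hpL : p L = ⟨0, h0n⟩ := Fin.ext hlast
  set k : Fin n := p.symm L with hkdef
  have hpk : p k = L := p.apply_symm_apply L
  have hdes' : (p ⟨1, h1n⟩ : ℕ) < (p ⟨0, h0n⟩ : ℕ) := Fin.lt_def.mp hdes
  -- main claim: value n-1 sits at position 0
  have hk0 : (k : ℕ) = 0 := by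
    by_contra hkne
    have hkval : (k : ℕ) < n := k.isLt
    have hkL : (k : ℕ) < n - 1 := by
      by_contra h
      have hk : k = L := Fin.ext (show (k : ℕ) = n - 1 by omega)
      rw [hk, hpL] at hpk
      have h5 : (0 : ℕ) = n - 1 := congrArg Fin.val hpk
      omega
    have hm1 : 1 ≤ (p ⟨0, h0n⟩ : ℕ) := by omega
    have hmn2 : (p ⟨0, h0n⟩ : ℕ) ≤ n - 2 := by
      have h2 : (p ⟨0, h0n⟩ : ℕ) < n := (p ⟨0, h0n⟩).isLt
      have h3 : (p ⟨0, h0n⟩ : ℕ) ≠ n - 1 := by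
        intro h
        have he : p ⟨0, h0n⟩ = L := Fin.ext h
        have h6 : (⟨0, h0n⟩ : Fin n) = k := p.injective (by rw [he, hpk])
        have h7 : (0 : ℕ) = (k : ℕ) := congrArg Fin.val h6
        omega
      omega
    -- p(1) = p(0) - 1
    have hp1 : (p ⟨1, h1n⟩ : ℕ) = (p ⟨0, h0n⟩ : ℕ) - 1 := by
      by_contra hne
      have hlt : (p ⟨1, h1n⟩ : ℕ) + 1 < (p ⟨0, h0n⟩ : ℕ) := by omega
      have hwn : (p ⟨1, h1n⟩ : ℕ) + 1 < n := by omega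
      have hpc : p (p.symm ⟨(p ⟨1, h1n⟩ : ℕ) + 1, hwn⟩) = ⟨(p ⟨1, h1n⟩ : ℕ) + 1, hwn⟩ :=
        p.apply_symm_apply _
      have hpcv : (p (p.symm ⟨(p ⟨1, h1n⟩ : ℕ) + 1, hwn⟩) : ℕ) = (p ⟨1, h1n⟩ : ℕ) + 1 :=
        congrArg Fin.val hpc
      have hc0 : ((p.symm ⟨(p ⟨1, h1n⟩ : ℕ) + 1, hwn⟩ : Fin n) : ℕ) ≠ 0 := by
        intro h
        have h4 : p.symm ⟨(p ⟨1, h1n⟩ : ℕ) + 1, hwn⟩ = ⟨0, h0n⟩ := Fin.ext h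
        rw [h4] at hpcv
        omega
      have hc1 : ((p.symm ⟨(p ⟨1, h1n⟩ : ℕ) + 1, hwn⟩ : Fin n) : ℕ) ≠ 1 := by
        intro h
        have h4 : p.symm ⟨(p ⟨1, h1n⟩ : ℕ) + 1, hwn⟩ = ⟨1, h1n⟩ := Fin.ext h
        rw [h4] at hpcv
        omega
      refine hA ⟨0, h0n⟩ ⟨1, h1n⟩ (p.symm ⟨(p ⟨1, h1n⟩ : ℕ) + 1, hwn⟩) ?_ ?_ ?_ ?_
      · exact Fin.lt_def.mpr (show (0 : ℕ) < 1 by omega)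
      · exact Fin.lt_def.mpr (show (1 : ℕ) < _ by omega)
      · exact Fin.lt_def.mpr (by omega)
      · exact Fin.lt_def.mpr (by omega)
    have hm2 : 2 ≤ (p ⟨0, h0n⟩ : ℕ) := by
      by_contra h
      have h1 : p ⟨1, h1n⟩ = ⟨0, h0n⟩ := Fin.ext (show (p ⟨1, h1n⟩ : ℕ) = 0 by omega)
      have h2 : (⟨1, h1n⟩ : Fin n) = L := p.injective (by rw [h1, hpL])
      have h5 : (1 : ℕ) = n - 1 := congrArg Fin.val h2
      omega
    have hk2 : 2 ≤ (k : ℕ) := by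
      by_contra h
      have hk1 : k = ⟨1, h1n⟩ := Fin.ext (show (k : ℕ) = 1 by omega)
      rw [hk1] at hpk
      have h5 : (p ⟨1, h1n⟩ : ℕ) = n - 1 := congrArg Fin.val hpk
      omega
    -- after position k, p is strictly decreasing
    have hdecK : ∀ b c : Fin n, (k : ℕ) < (b : ℕ) → (b : ℕ) < (c : ℕ) →
        (p c : ℕ) < (p b : ℕ) := by
      intro b c hb hc
      by_contra h
      have hvne : (p b : ℕ) ≠ (p c : ℕ) := by
        intro he
        have h5 : b = c := p.injective (Fin.ext he)
        have h6 : (b : ℕ) = (c : ℕ) := congrArg Fin.val h5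
        omega
      have hlt : (p b : ℕ) < (p c : ℕ) := by omega
      have hcL : (p c : ℕ) < n - 1 := by
        have h1 : (p c : ℕ) < n := (p c).isLt
        have h2 : (p c : ℕ) ≠ n - 1 := by
          intro he
          have h7 : c = k := p.injective (by rw [hpk]; exact Fin.ext he)
          have h8 : (c : ℕ) = (k : ℕ) := congrArg Fin.val h7
          omega
        omega
      refine hA k b c (Fin.lt_def.mpr hb) (Fin.lt_def.mpr hc) (Fin.lt_def.mpr hlt) ?_
      rw [hpk]
      exact Fin.lt_def.mpr (show (p c : ℕ) < n - 1 from hcL)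
    have hn4 : 4 ≤ n := by omega
    have hn2 : n - 2 < n := by omega
    by_cases hc1 : (p ⟨n - 2, hn2⟩ : ℕ) = 1
    · -- Case 1 : value 1 is at position n-2; build a 312 in p²
      have hpj : p (p.symm k) = k := p.apply_symm_apply k
      have hj1 : ((p.symm k : Fin n) : ℕ) ≠ n - 1 := by
        intro h
        have h4 : p.symm k = L := Fin.ext h
        rw [h4, hpL] at hpj
        have h5 : (0 : ℕ) = (k : ℕ) := congrArg Fin.val hpj
        omega
      have hj2 : ((p.symm k : Fin n) : ℕ) ≠ n - 2 := by
        intro h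
        have h4 : p.symm k = ⟨n - 2, hn2⟩ := Fin.ext h
        rw [h4] at hpj
        have h5 : (p ⟨n - 2, hn2⟩ : ℕ) = (k : ℕ) := congrArg Fin.val hpj
        omega
      have hjlt : ((p.symm k : Fin n) : ℕ) < n - 2 := by
        have := (p.symm k).isLt; omega
      refine hA2 (p.symm k) ⟨n - 2, hn2⟩ L ?_ ?_ ?_ ?_
      · exact Fin.lt_def.mpr (show ((p.symm k : Fin n) : ℕ) < n - 2 from hjlt)
      · exact Fin.lt_def.mpr (show (n - 2 : ℕ) < n - 1 by omega)
      · have e1 : p ⟨n - 2, hn2⟩ = ⟨1, h1n⟩ := Fin.ext hc1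
        rw [e1, hpL]
        exact hdes
      · rw [hpL, hpj, hpk]
        exact Fin.lt_def.mpr (show (p ⟨0, h0n⟩ : ℕ) < n - 1 by omega)
    · -- Case 2 : value 1 is before position k
      have hpt : p (p.symm ⟨1, h1n⟩) = ⟨1, h1n⟩ := p.apply_symm_apply _
      have hptv : (p (p.symm ⟨1, h1n⟩) : ℕ) = 1 := congrArg Fin.val hpt
      have htk : ((p.symm ⟨1, h1n⟩ : Fin n) : ℕ) < (k : ℕ) := by
        have ht_ne_k : ((p.symm ⟨1, h1n⟩ : Fin n) : ℕ) ≠ (k : ℕ) := by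
          intro h
          have h4 : p.symm ⟨1, h1n⟩ = k := Fin.ext h
          rw [h4, hpk] at hpt
          have h5 : (n - 1 : ℕ) = 1 := congrArg Fin.val hpt
          omega
        by_contra hge
        have hkt : (k : ℕ) < ((p.symm ⟨1, h1n⟩ : Fin n) : ℕ) := by omega
        have htL : ((p.symm ⟨1, h1n⟩ : Fin n) : ℕ) ≠ n - 1 := by
          intro h
          have h4 : p.symm ⟨1, h1n⟩ = L := Fin.ext h
          rw [h4, hpL] at hpt
          have h5 : (0 : ℕ) = 1 := congrArg Fin.val hpt
          omega
        have htn2 : ((p.symm ⟨1, h1n⟩ : Fin n) : ℕ) ≠ n - 2 := by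
          intro h
          have h4 : p.symm ⟨1, h1n⟩ = ⟨n - 2, hn2⟩ := Fin.ext h
          rw [h4] at hpt
          exact hc1 (congrArg Fin.val hpt)
        have ht1 : ((p.symm ⟨1, h1n⟩ : Fin n) : ℕ) + 1 < n := by
          have := (p.symm ⟨1, h1n⟩).isLt; omega
        have key := hdecK (p.symm ⟨1, h1n⟩) ⟨((p.symm ⟨1, h1n⟩ : Fin n) : ℕ) + 1, ht1⟩ hkt
          (show ((p.symm ⟨1, h1n⟩ : Fin n) : ℕ) < ((p.symm ⟨1, h1n⟩ : Fin n) : ℕ) + 1 by omega)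
        have h0 : (p ⟨((p.symm ⟨1, h1n⟩ : Fin n) : ℕ) + 1, ht1⟩ : ℕ) = 0 := by omega
        have h6 : (⟨((p.symm ⟨1, h1n⟩ : Fin n) : ℕ) + 1, ht1⟩ : Fin n) = L :=
          p.injective (by rw [hpL]; exact Fin.ext h0)
        have h7 : ((p.symm ⟨1, h1n⟩ : Fin n) : ℕ) + 1 = n - 1 := congrArg Fin.val h6
        omega
      -- every value between 1 and p(0) sits before position k
      have hsmall : ∀ (v : ℕ) (hv : v < n), 1 ≤ v → v ≤ (p ⟨0, h0n⟩ : ℕ) →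
          ((p.symm ⟨v, hv⟩ : Fin n) : ℕ) < (k : ℕ) := by
        intro v hv h1v hvm
        have hpb : p (p.symm ⟨v, hv⟩) = ⟨v, hv⟩ := p.apply_symm_apply _
        have hpbv : (p (p.symm ⟨v, hv⟩) : ℕ) = v := congrArg Fin.val hpb
        rcases eq_or_lt_of_le hvm with he | hltm
        · -- v = p(0): position 0
          have h4 : p ⟨0, h0n⟩ = ⟨v, hv⟩ := Fin.ext he.symm
          have hb0 : p.symm ⟨v, hv⟩ = ⟨0, h0n⟩ := p.injective (by rw [hpb, h4])
          rw [hb0]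
          exact show (0 : ℕ) < (k : ℕ) by omega
        · rcases eq_or_lt_of_le h1v with he1 | hlt1
          · -- v = 1 : position t
            have h4 : (⟨v, hv⟩ : Fin n) = ⟨1, h1n⟩ := Fin.ext he1.symm
            have hb0 : p.symm ⟨v, hv⟩ = p.symm ⟨1, h1n⟩ := p.injective (by rw [hpb, h4, hpt])
            rw [hb0]; exact htk
          · -- 1 < v < p 0
            by_contra hge
            have htb : ((p.symm ⟨1, h1n⟩ : Fin n) : ℕ) < ((p.symm ⟨v, hv⟩ : Fin n) : ℕ) := by
              omega
            have ht0 : 0 < ((p.symm ⟨1, h1n⟩ : Fin n) : ℕ) := by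
              rcases Nat.eq_zero_or_pos ((p.symm ⟨1, h1n⟩ : Fin n) : ℕ) with h | h
              · exfalso
                have h4 : p.symm ⟨1, h1n⟩ = ⟨0, h0n⟩ := Fin.ext h
                rw [h4] at hptv
                omega
              · exact h
            refine hA ⟨0, h0n⟩ (p.symm ⟨1, h1n⟩) (p.symm ⟨v, hv⟩) ?_ ?_ ?_ ?_
            · exact Fin.lt_def.mpr (show (0 : ℕ) < _ from ht0)
            · exact Fin.lt_def.mpr htb
            · exact Fin.lt_def.mpr (by omega)
            · exact Fin.lt_def.mpr (by omega)
      by_cases hB : ∃ a : Fin n, (a : ℕ) < (k : ℕ) ∧ (p ⟨0, h0n⟩ : ℕ) < (p (p a) : ℕ)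
      · -- some position before k maps (under p²) above p(0): 312 in p²
        obtain ⟨a, hak, hpa⟩ := hB
        refine hA2 a k L (Fin.lt_def.mpr hak)
          (Fin.lt_def.mpr (show (k : ℕ) < n - 1 from hkL)) ?_ ?_
        · rw [hpk, hpL]
          exact Fin.lt_def.mpr (show (0 : ℕ) < (p ⟨0, h0n⟩ : ℕ) by omega)
        · rw [hpL]
          exact Fin.lt_def.mpr hpa
      · -- otherwise p maps [0,k) into [0,k): contradiction since p⁻¹(0) = n-1
        push_neg at hB
        have hmaps : ∀ a : Fin n, (a : ℕ) < (k : ℕ) → ((p a : Fin n) : ℕ) < (k : ℕ) := by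
          intro a hak
          have hw := hB a hak
          by_cases hw0 : (p (p a) : ℕ) = 0
          · exfalso
            have h1 : p (p a) = ⟨0, h0n⟩ := Fin.ext hw0
            have h2 : p a = L := p.injective (by rw [h1, hpL])
            have h3 : a = k := p.injective (by rw [h2, hpk])
            rw [h3] at hak
            omega
          · have h1w : 1 ≤ (p (p a) : ℕ) := by omega
            have hvn : (p (p a) : ℕ) < n := (p (p a)).isLt
            have hs := hsmall (p (p a) : ℕ) hvn h1w hw
            have he : (⟨(p (p a) : ℕ), hvn⟩ : Fin n) = p (p a) := Fin.ext rfl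
            rw [he, p.symm_apply_apply] at hs
            exact hs
        have himg : (Finset.univ.filter (fun a : Fin n => (a : ℕ) < (k : ℕ))).image p ⊆
            Finset.univ.filter (fun a : Fin n => (a : ℕ) < (k : ℕ)) := by
          intro x hx
          simp only [Finset.mem_image, Finset.mem_filter, Finset.mem_univ, true_and] at hx ⊢
          obtain ⟨a, ha, rfl⟩ := hx
          exact hmaps a ha
        have hcard : (Finset.univ.filter (fun a : Fin n => (a : ℕ) < (k : ℕ))).card ≤
            ((Finset.univ.filter (fun a : Fin n => (a : ℕ) < (k : ℕ))).image p).card := by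
          rw [Finset.card_image_of_injective _ p.injective]
        have heq := Finset.eq_of_subset_of_card_le himg hcard
        have h0F : (⟨0, h0n⟩ : Fin n) ∈
            Finset.univ.filter (fun a : Fin n => (a : ℕ) < (k : ℕ)) := by
          simp only [Finset.mem_filter, Finset.mem_univ, true_and]
          exact show (0 : ℕ) < (k : ℕ) by omega
        rw [← heq] at h0F
        obtain ⟨a, haF, hpa0⟩ := Finset.mem_image.mp h0F
        have haL : a = L := p.injective (by rw [hpa0, hpL])
        rw [haL] at haF
        simp only [Finset.mem_filter, Finset.mem_univ, true_and] at haF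
        have h9 : (n - 1 : ℕ) < (k : ℕ) := haF
        omega
  -- now k = 0, i.e. p(0) = n-1; p is strictly decreasing
  have hkk : k = ⟨0, h0n⟩ := Fin.ext hk0
  have hp0 : p ⟨0, h0n⟩ = L := by rw [← hkk]; exact hpk
  have hval0 : (p ⟨0, h0n⟩ : ℕ) = n - 1 := congrArg Fin.val hp0
  have hadj : ∀ (i : ℕ) (h1 : i < n) (h2 : i + 1 < n),
      (p ⟨i + 1, h2⟩ : ℕ) < (p ⟨i, h1⟩ : ℕ) := by
    intro i h1 h2
    rcases Nat.eq_zero_or_pos i with rfl | hi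
    · exact hdes'
    · by_contra hge
      have hvne : (p ⟨i, h1⟩ : ℕ) ≠ (p ⟨i + 1, h2⟩ : ℕ) := by
        intro he
        have h5 : (⟨i, h1⟩ : Fin n) = ⟨i + 1, h2⟩ := p.injective (Fin.ext he)
        have h6 : i = i + 1 := congrArg Fin.val h5
        omega
      have hlt : (p ⟨i, h1⟩ : ℕ) < (p ⟨i + 1, h2⟩ : ℕ) := by omega
      have hne2 : (p ⟨i + 1, h2⟩ : ℕ) < n - 1 := by
        have ha : (p ⟨i + 1, h2⟩ : ℕ) < n := (p _).isLt
        have hb : (p ⟨i + 1, h2⟩ : ℕ) ≠ n - 1 := by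
          intro he
          have h5 : (⟨i + 1, h2⟩ : Fin n) = ⟨0, h0n⟩ :=
            p.injective (by rw [hp0]; exact Fin.ext he)
          have h6 : i + 1 = 0 := congrArg Fin.val h5
          omega
        omega
      exact hA ⟨0, h0n⟩ ⟨i, h1⟩ ⟨i + 1, h2⟩ (Fin.lt_def.mpr (show (0 : ℕ) < i from hi))
        (Fin.lt_def.mpr (show i < i + 1 by omega)) (Fin.lt_def.mpr hlt)
        (Fin.lt_def.mpr (by omega))
  have upper : ∀ i : ℕ, ∀ j : Fin n, (j : ℕ) = i → (p j : ℕ) ≤ n - 1 - i := by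
    intro i
    induction i with
    | zero =>
      intro j hj
      have h4 : j = ⟨0, h0n⟩ := Fin.ext hj
      rw [h4]
      omega
    | succ i ih =>
      intro j hj
      have hjn : (j : ℕ) < n := j.isLt
      have hi : i < n := by omega
      have hi1 : i + 1 < n := by omega
      have h1 := ih ⟨i, hi⟩ rfl
      have h2 := hadj i hi hi1
      have hjj : j = ⟨i + 1, hi1⟩ := Fin.ext hj
      rw [hjj]
      omega
  have lower : ∀ d : ℕ, d < n → ∀ j : Fin n, (j : ℕ) = n - 1 - d → d ≤ (p j : ℕ) := by
    intro d
    induction d with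
    | zero => intro _ j _; exact Nat.zero_le _
    | succ d ih =>
      intro hd j hj
      have hjn : (j : ℕ) < n := j.isLt
      have hj1 : (j : ℕ) + 1 < n := by omega
      have hih := ih (by omega) ⟨(j : ℕ) + 1, hj1⟩ (show (j : ℕ) + 1 = n - 1 - d by omega)
      have hk2 := hadj (j : ℕ) hjn hj1
      have hk2' : (p ⟨(j : ℕ) + 1, hj1⟩ : ℕ) < (p j : ℕ) := hk2
      omega
  intro i
  have hin : (i : ℕ) < n := i.isLt
  have h1 := upper (i : ℕ) i rfl
  have h2 := lower (n - 1 - (i : ℕ)) (by omega) i (by omega)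
  omega
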